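/- arXiv:2402.08317 — 2 statements merged into one kernel-verified Lean document; each statement's English description precedes it below -/
import Mathlib

section
/- For every φ, ψ ∈ ℓ², the weak resolution of identity holds: ⟨ψ, φ⟩ = (1/π) ∫_ℂ ⟨ψ|α⟩⟨α|φ⟩ d²α, where |α⟩ is the coherent state and the integral is over the whole complex plane with Lebesgue measure. -/
/-!
The coordinate functions `α ↦ conj ⟨e_n|α⟩` of the coherent states are orthonormal in
`L²(ℂ, d²α/π)`: the diagonal integrals are Gaussian moments, and the off-diagonal ones
vanish because rotating `α` multiplies the integrand by a nontrivial character. Hence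
`χ ↦ ⟨α|χ⟩` is the linear isometry `ℓ² → L²(ℂ, d²α/π)` sending `e_n` to the `n`-th of
these functions, and the identity says that this isometry preserves inner products.
-/

open MeasureTheory Filter Topology Real
open scoped InnerProductSpace ComplexConjugate

namespace MeasureTheory.Lp

variable {X E : Type*} [MeasurableSpace X] {μ : Measure X} [NormedAddCommGroup E]
  {p : ENNReal} [Fact (1 ≤ p)]

theorem ae_eq_of_tendsto_of_ae_tendsto {f : ℕ → Lp E p μ} {g : Lp E p μ} {h : X → E}
    (hfg : Tendsto f atTop (𝓝 g))
    (hfh : ∀ᵐ x ∂μ, Tendsto (fun n => f n x) atTop (𝓝 (h x))) :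
    g =ᵐ[μ] h := by
  obtain ⟨ns, hns, hg⟩ := (tendstoInMeasure_of_tendsto_Lp hfg).exists_seq_tendsto_ae
  filter_upwards [hg, hfh] with x hgx hhx
  exact tendsto_nhds_unique hgx (hhx.comp hns.tendsto_atTop)

end MeasureTheory.Lp

section CoordinateIsometry

variable {𝕜 X : Type*} [RCLike 𝕜] [MeasurableSpace X] {μ : Measure X}
  {c : X → lp (fun _ : ℕ => 𝕜) 2}

theorem orthonormal_toLp_conj_coord (hc : ∀ n, MemLp (fun x => c x n) 2 μ)
    (horth : ∀ n m, ∫ x, conj (c x n) * c x m ∂μ = if n = m then 1 else 0) :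
    Orthonormal 𝕜 fun n => (hc n).star.toLp := by
  rw [orthonormal_iff_ite]
  intro n m
  have hδ : (if n = m then 1 else 0 : 𝕜) = conj (if n = m then 1 else 0) := by
    split_ifs <;> simp
  rw [L2.inner_def, hδ, ← horth n m, ← integral_conj]
  refine integral_congr_ae ?_
  filter_upwards [(hc n).star.coeFn_toLp, (hc m).star.coeFn_toLp] with x hn hm
  simp only [hn, hm, Pi.star_apply, RCLike.star_def, RCLike.inner_apply, map_mul,
    RCLike.conj_conj]
  ring

theorem coeFn_linearIsometry_ae_eq_inner (hc : ∀ n, MemLp (fun x => c x n) 2 μ)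
    (he : Orthonormal 𝕜 fun n => (hc n).star.toLp)
    (χ : lp (fun _ : ℕ => 𝕜) 2) :
    (he.orthogonalFamily.linearIsometry χ : X → 𝕜) =ᵐ[μ] fun x => ⟪c x, χ⟫_𝕜 := by
  set e := fun n => (hc n).star.toLp
  refine Lp.ae_eq_of_tendsto_of_ae_tendsto
    (he.orthogonalFamily.hasSum_linearIsometry χ).tendsto_sum_nat ?_
  have hterm : ∀ᵐ x ∂μ, ∀ n, (χ n • e n : Lp 𝕜 2 μ) x = χ n * conj (c x n) :=
    ae_all_iff.2 fun n => by
      filter_upwards [Lp.coeFn_smul (χ n) (e n), (hc n).star.coeFn_toLp] with x h1 h2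
      rw [h1, Pi.smul_apply, h2, Pi.star_apply, smul_eq_mul, RCLike.star_def]
  have hsum : ∀ᵐ x ∂μ, ∀ N, (∑ n ∈ Finset.range N, χ n • e n : Lp 𝕜 2 μ) x
      = ∑ n ∈ Finset.range N, (χ n • e n : Lp 𝕜 2 μ) x :=
    ae_all_iff.2 fun N => Lp.coeFn_fun_finsetSum _ _
  filter_upwards [hterm, hsum] with x h1 h2
  simp only [LinearIsometry.toSpanSingleton_apply, h2, h1]
  convert (lp.hasSum_inner (c x) χ).tendsto_sum_nat using 3
  exact (RCLike.inner_apply _ _).symm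

theorem integral_inner_mul_inner_of_orthonormal_coord (hc : ∀ n, MemLp (fun x => c x n) 2 μ)
    (horth : ∀ n m, ∫ x, conj (c x n) * c x m ∂μ = if n = m then 1 else 0)
    (ψ φ : lp (fun _ : ℕ => 𝕜) 2) :
    ∫ x, ⟪ψ, c x⟫_𝕜 * ⟪c x, φ⟫_𝕜 ∂μ = ⟪ψ, φ⟫_𝕜 := by
  have he := orthonormal_toLp_conj_coord hc horth
  rw [← he.orthogonalFamily.linearIsometry.inner_map_map, L2.inner_def]
  refine integral_congr_ae ?_
  filter_upwards [coeFn_linearIsometry_ae_eq_inner hc he ψ,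
    coeFn_linearIsometry_ae_eq_inner hc he φ] with x hψ hφ
  rw [hψ, hφ, RCLike.inner_apply', inner_conj_symm]

end CoordinateIsometry

theorem integral_eq_zero_of_rotation_equivariant {E : Type*} [NormedAddCommGroup E]
    [NormedSpace ℂ E] {f : ℂ → E} {k : ℤ} (hk : k ≠ 0)
    (hf : ∀ (u : Circle) z, f (u * z) = (u : ℂ) ^ k • f z) :
    ∫ z, f z = 0 := by
  set u := Circle.exp (π / k)
  have hu : (u : ℂ) ^ k = -1 := by
    rw [Circle.coe_exp, ← Complex.exp_int_mul, ← Complex.exp_pi_mul_I]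
    congr 1
    push_cast
    field_simp
  have hrot : ∫ z, f (u * z) = ∫ z, f z :=
    (rotation u).measurePreserving.integral_comp (rotation u).toHomeomorph.measurableEmbedding f
  have h : ∫ z, f z = -∫ z, f z := by
    conv_lhs => rw [← hrot]
    simp_rw [hf, hu, neg_one_smul, integral_neg]
  have h2 : (2 : ℂ) • ∫ z, f z = 0 := by
    rw [two_smul]
    nth_rw 1 [h]
    exact neg_add_cancel _
  exact (smul_eq_zero.mp h2).resolve_left two_ne_zero

noncomputable def coherentCoeff (n : ℕ) (α : ℂ) : ℂ :=
  (Real.exp (-‖α‖ ^ 2 / 2) : ℂ) * α ^ n / (Real.sqrt n.factorial : ℂ)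

theorem continuous_coherentCoeff (n : ℕ) : Continuous (coherentCoeff n) := by
  unfold coherentCoeff
  fun_prop

theorem coherentCoeff_circle_mul (n : ℕ) (u : Circle) (z : ℂ) :
    coherentCoeff n (u * z) = (u : ℂ) ^ n * coherentCoeff n z := by
  simp only [coherentCoeff, norm_mul, Circle.norm_coe, one_mul, mul_pow]
  ring

theorem norm_coherentCoeff_sq (n : ℕ) (z : ℂ) :
    ‖coherentCoeff n z‖ ^ 2 = ‖z‖ ^ (2 * n) * rexp (-‖z‖ ^ 2) / n.factorial := by
  have : (0 : ℝ) ≤ n.factorial := by positivity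
  simp only [coherentCoeff, norm_div, norm_mul, norm_pow, Complex.norm_real, Real.norm_eq_abs,
    Real.abs_exp, abs_of_nonneg (Real.sqrt_nonneg _), div_pow, mul_pow, Real.sq_sqrt this,
    ← Real.exp_nat_mul]
  rw [← pow_mul, mul_comm n 2, mul_comm (rexp _)]
  congr 3
  push_cast
  ring

theorem integral_norm_coherentCoeff_sq (n : ℕ) : ∫ z, ‖coherentCoeff n z‖ ^ 2 = π := by
  have h := Complex.integral_rpow_mul_exp_neg_rpow (p := 2) (q := ((2 * n : ℕ) : ℝ)) one_le_two
    (by linarith [(by positivity : (0 : ℝ) ≤ (2 * n : ℕ))])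
  simp only [Real.rpow_natCast, Real.rpow_two] at h
  have hΓ : (((2 * n : ℕ) : ℝ) + 2) / 2 = n + 1 := by push_cast; ring
  simp_rw [norm_coherentCoeff_sq]
  rw [integral_div, h, hΓ, Real.Gamma_nat_eq_factorial]
  field_simp

theorem memLp_coherentCoeff (n : ℕ) : MemLp (coherentCoeff n) 2 :=
  (memLp_two_iff_integrable_sq_norm (continuous_coherentCoeff n).aestronglyMeasurable).2 <|
    .of_integral_ne_zero <| by rw [integral_norm_coherentCoeff_sq]; exact pi_ne_zero

theorem integral_conj_coherentCoeff_mul (n m : ℕ) :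
    ∫ z, conj (coherentCoeff n z) * coherentCoeff m z = if n = m then (π : ℂ) else 0 := by
  split_ifs with h
  · subst h
    simp_rw [Complex.conj_mul', ← Complex.ofReal_pow, integral_complex_ofReal,
      integral_norm_coherentCoeff_sq]
  · refine integral_eq_zero_of_rotation_equivariant (k := m - n)
      (sub_ne_zero.2 (by exact_mod_cast Ne.symm h)) fun u z => ?_
    have hu : (u : ℂ) ≠ 0 := Circle.coe_ne_zero u
    rw [coherentCoeff_circle_mul, coherentCoeff_circle_mul, map_mul, map_pow,
      ← Circle.coe_inv_eq_conj, Circle.coe_inv, smul_eq_mul, zpow_sub₀ hu, zpow_natCast,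
      zpow_natCast, div_eq_mul_inv, ← inv_pow]
    ring

/-- Weak resolution of the identity: for every `φ, ψ ∈ ℓ²`,
`⟨ψ, φ⟩ = (1/π) ∫_ℂ ⟨ψ|α⟩⟨α|φ⟩ d²α`. -/
theorem weak_resolution_of_identity (coh : ℂ → lp (fun _ : ℕ => ℂ) 2)
    (hcoh : ∀ (α : ℂ) (n : ℕ),
      coh α n = (Real.exp (-‖α‖ ^ 2 / 2) : ℂ) * α ^ n / (Real.sqrt n.factorial : ℂ))
    (ψ φ : lp (fun _ : ℕ => ℂ) 2) :
    ⟪ψ, φ⟫_ℂ = (π : ℂ)⁻¹ * ∫ α : ℂ, ⟪ψ, coh α⟫_ℂ * ⟪coh α, φ⟫_ℂ := by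
  have hcoord : ∀ α n, coh α n = coherentCoeff n α := hcoh
  have hπ : (ENNReal.ofReal π⁻¹).toReal = π⁻¹ :=
    ENNReal.toReal_ofReal (inv_nonneg.2 pi_pos.le)
  have hmem : ∀ n, MemLp (fun α => coh α n) 2 (ENNReal.ofReal π⁻¹ • volume) := fun n => by
    simp_rw [hcoord]
    exact (memLp_coherentCoeff n).smul_measure ENNReal.ofReal_ne_top
  have horth : ∀ n m, ∫ α, conj (coh α n) * coh α m ∂(ENNReal.ofReal π⁻¹ • volume)
      = if n = m then 1 else 0 := fun n m => by
    simp_rw [hcoord, integral_smul_measure, hπ, integral_conj_coherentCoeff_mul]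
    split_ifs <;> simp [pi_ne_zero]
  rw [← integral_inner_mul_inner_of_orthonormal_coord hmem horth, integral_smul_measure, hπ,
    Complex.real_smul, Complex.ofReal_inv]
end

section
/- Strong convergence of the coherent-state resolution of identity: for every φ ∈ ℓ² and every ε > 0 there exists R > 0 such that for all r ≥ R, ‖φ − (1/π) ∫_{|α|≤r} |α⟩⟨α|φ⟩ d²α‖ < ε. Hence (1/π)∫_{|α|≤r}|α⟩⟨α| d²α → I in the strong operator topology as r → ∞. -/
/-!
The operator `T r = π⁻¹ ∫_{|α| ≤ r} |α⟩⟨α| d²α` is diagonal in the number basis: in polar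
coordinates the angular integral of `conj α ^ m * α ^ n` vanishes unless `m = n`, so
`T r eₙ = wₙ(r) eₙ` with `wₙ(r) = (2 / n!) ∫₀^r x^(2n+1) e^(-x²) dx`. These weights lie in `[0, 1]`
and tend to `Γ(n + 1) / n! = 1`, so `T r φ → φ` coordinatewise with `|(T r φ - φ)ₙ| ≤ |φₙ|`, and
dominated convergence in `ℓ²` upgrades this to convergence in norm.
-/

open MeasureTheory Real Set Filter Topology
open scoped InnerProductSpace ENNReal lp

theorem continuous_of_continuous_inner {X E : Type*} [TopologicalSpace X]
    [NormedAddCommGroup E] [InnerProductSpace ℂ E] {f : X → E}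
    (hf : Continuous fun p : X × X => ⟪f p.1, f p.2⟫_ℂ) : Continuous f := by
  rw [continuous_iff_continuousAt]
  intro a
  rw [ContinuousAt, tendsto_iff_norm_sub_tendsto_zero]
  have hnorm (x : X) : ‖f x - f a‖ =
      √(RCLike.re (⟪f x, f x⟫_ℂ - ⟪f x, f a⟫_ℂ - ⟪f a, f x⟫_ℂ + ⟪f a, f a⟫_ℂ)) := by
    rw [← inner_sub_sub_self, ← @norm_sq_eq_re_inner ℂ, sqrt_sq (norm_nonneg _)]
  have h₁ : Continuous fun x => ⟪f x, f x⟫_ℂ := hf.comp (continuous_id.prodMk continuous_id)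
  have h₂ : Continuous fun x => ⟪f x, f a⟫_ℂ := hf.comp (continuous_id.prodMk continuous_const)
  have h₃ : Continuous fun x => ⟪f a, f x⟫_ℂ := hf.comp (continuous_const.prodMk continuous_id)
  have hcont : Continuous fun x =>
      √(RCLike.re (⟪f x, f x⟫_ℂ - ⟪f x, f a⟫_ℂ - ⟪f a, f x⟫_ℂ + ⟪f a, f a⟫_ℂ)) := by
    fun_prop
  simpa [hnorm] using hcont.tendsto a

theorem lp.tendsto_zero_of_norm_apply_le {ι α : Type*} {E : α → Type*}
    [∀ a, NormedAddCommGroup (E a)] {p : ℝ≥0∞} [Fact (1 ≤ p)] (hp : p ≠ ∞) {l : Filter ι}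
    (F : lp E p) {g : ι → lp E p} (hle : ∀ i a, ‖g i a‖ ≤ ‖F a‖)
    (hg : ∀ a, Tendsto (fun i => g i a) l (𝓝 0)) : Tendsto g l (𝓝 0) := by
  have hp : 0 < p.toReal := ENNReal.toReal_pos (zero_lt_one.trans_le Fact.out).ne' hp
  have hsum : Tendsto (fun i => ‖g i‖ ^ p.toReal) l (𝓝 0) := by
    simp_rw [lp.norm_rpow_eq_tsum hp]
    simpa [zero_rpow hp.ne'] using tendsto_tsum_of_dominated_convergence
      ((lp.memℓp F).summable hp) (fun a => (hg a).norm.rpow_const (Or.inr hp.le))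
      (Eventually.of_forall fun i a => by
        rw [norm_of_nonneg (by positivity)]
        exact rpow_le_rpow (norm_nonneg _) (hle i a) hp.le)
  rw [tendsto_zero_iff_norm_tendsto_zero]
  simpa [zero_rpow (inv_pos.2 hp).ne', ← rpow_mul (norm_nonneg _), mul_inv_cancel₀ hp.ne'] using
    hsum.rpow_const (p := p.toReal⁻¹) (Or.inr (by positivity))

theorem lp.apply_eq_mul_of_map_single {ι 𝕜 : Type*} [DecidableEq ι] [RCLike 𝕜]
    {p : ℝ≥0∞} [Fact (1 ≤ p)] (hp : p ≠ ∞) {T : ℓ^p(ι, 𝕜) →L[𝕜] ℓ^p(ι, 𝕜)} {c : ι → 𝕜}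
    (hT : ∀ i, T (lp.single p i 1) = c i • lp.single p i 1) (f : ℓ^p(ι, 𝕜)) (n : ι) :
    T f n = c n * f n := by
  have hterm (i : ι) : T (lp.single p i (f i)) n = if i = n then c n * f n else 0 := by
    rw [← mul_one (f i), ← smul_eq_mul, lp.single_smul, map_smul, hT]
    by_cases h : i = n
    · subst h; simp [mul_comm]
    · simp [h]
  have hsum := ((lp.hasSum_single hp f).mapL T).mapL (lp.evalCLM 𝕜 (fun _ => 𝕜) p n)
  simp only [lp.evalCLM, LinearMap.mkContinuous_apply, lp.evalₗ_apply, hterm] at hsum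
  exact hsum.unique (hasSum_ite_eq n _)

theorem lp.integral_apply {X α : Type*} [MeasurableSpace X] {μ : Measure X} {E : α → Type*}
    [∀ a, NormedAddCommGroup (E a)] [∀ a, NormedSpace ℝ (E a)] [∀ a, CompleteSpace (E a)]
    {p : ℝ≥0∞} [Fact (1 ≤ p)] {F : X → lp E p} (hF : Integrable F μ) (a : α) :
    (∫ x, F x ∂μ) a = ∫ x, F x a ∂μ :=
  ((lp.evalCLM ℝ E p a).integral_comp_comm hF).symm

theorem Complex.setIntegral_closedBall_eq_polarCoord {E : Type*} [NormedAddCommGroup E]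
    [NormedSpace ℝ E] (f : ℂ → E) (r : ℝ) :
    ∫ z in Metric.closedBall 0 r, f z =
      ∫ p in Ioc 0 r ×ˢ Ioo (-π) π, p.1 • f (Complex.polarCoord.symm p) := by
  have hset : Ioc 0 r ×ˢ Ioo (-π) π = polarCoord.target ∩ Prod.fst ⁻¹' Iic r := by
    ext ⟨ρ, θ⟩
    simp [polarCoord_target, and_assoc, and_comm, and_left_comm]
  rw [← integral_indicator measurableSet_closedBall, ← Complex.integral_comp_polarCoord_symm,
    hset, ← setIntegral_indicator (measurable_fst measurableSet_Iic)]
  refine setIntegral_congr_fun polarCoord.open_target.measurableSet fun p hp => ?_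
  have hρ : 0 < p.1 := hp.1
  by_cases h : p.1 ≤ r <;> simp [indicator, abs_of_pos hρ, h]

theorem integral_exp_int_mul_I (k : ℤ) :
    ∫ θ in Ioo (-π) π, Complex.exp (k * θ * Complex.I) = if k = 0 then (2 * π : ℂ) else 0 := by
  rw [integral_Ioc_eq_integral_Ioo.symm, ← intervalIntegral.integral_of_le (by linarith [pi_pos])]
  split_ifs with hk
  · simp [hk]; ring
  · have hc : (k : ℂ) * Complex.I ≠ 0 := by simp [hk]
    simp_rw [mul_right_comm _ _ Complex.I]
    rw [integral_exp_mul_complex hc, div_eq_zero_iff, sub_eq_zero]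
    exact Or.inl (Complex.exp_eq_exp_iff_exists_int.2 ⟨k, by push_cast; ring⟩)

noncomputable def radialMoment (n : ℕ) (r : ℝ) : ℝ :=
  ∫ x in Ioc 0 r, x ^ (2 * n + 1) * rexp (-x ^ 2)

theorem integrableOn_pow_mul_exp_neg_sq (n : ℕ) :
    IntegrableOn (fun x : ℝ => x ^ n * rexp (-x ^ 2)) (Ioi 0) := by
  simpa [Real.rpow_natCast] using integrableOn_rpow_mul_exp_neg_mul_sq (b := 1) one_pos
    (s := n) (by linarith [n.cast_nonneg (α := ℝ)])

theorem integral_Ioi_pow_mul_exp_neg_sq (n : ℕ) :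
    ∫ x in Ioi 0, x ^ (2 * n + 1) * rexp (-x ^ 2) = n.factorial / 2 := by
  have h := integral_rpow_mul_exp_neg_rpow (p := (2 : ℕ)) (q := (2 * n + 1 : ℕ)) two_pos
    (by linarith [(2 * n + 1).cast_nonneg (α := ℝ)])
  simp only [Real.rpow_natCast] at h
  rw [h, show (((2 * n + 1 : ℕ) : ℝ) + 1) / (2 : ℕ) = n + 1 by push_cast; ring,
    Real.Gamma_nat_eq_factorial]
  ring

theorem radialMoment_nonneg (n : ℕ) (r : ℝ) : 0 ≤ radialMoment n r :=
  setIntegral_nonneg measurableSet_Ioc fun x hx => by have := hx.1; positivity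

theorem radialMoment_le (n : ℕ) (r : ℝ) : radialMoment n r ≤ n.factorial / 2 := by
  rw [← integral_Ioi_pow_mul_exp_neg_sq]
  exact setIntegral_mono_set (integrableOn_pow_mul_exp_neg_sq _)
    ((ae_restrict_iff' measurableSet_Ioi).2 (ae_of_all _ fun x (hx : 0 < x) => by positivity))
    Ioc_subset_Ioi_self.eventuallyLE

theorem tendsto_radialMoment (n : ℕ) :
    Tendsto (radialMoment n) atTop (𝓝 (n.factorial / 2)) := by
  rw [← integral_Ioi_pow_mul_exp_neg_sq]
  refine (intervalIntegral_tendsto_integral_Ioi 0 (integrableOn_pow_mul_exp_neg_sq _)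
    tendsto_id).congr' ?_
  filter_upwards [eventually_ge_atTop 0] with r hr
  rw [id, intervalIntegral.integral_of_le hr, radialMoment]

theorem integral_closedBall_conj_pow_mul_pow_mul_exp (m n : ℕ) (r : ℝ) :
    ∫ z in Metric.closedBall 0 r, (starRingEnd ℂ) z ^ m * z ^ n * (rexp (-‖z‖ ^ 2) : ℂ) =
      if m = n then (2 * π * radialMoment n r : ℂ) else 0 := by
  have hpolar : ∀ p ∈ Ioc 0 r ×ˢ Ioo (-π) π,
      p.1 • ((starRingEnd ℂ) (Complex.polarCoord.symm p) ^ m * Complex.polarCoord.symm p ^ n *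
        (rexp (-‖Complex.polarCoord.symm p‖ ^ 2) : ℂ)) =
      ((p.1 ^ (m + n + 1) * rexp (-p.1 ^ 2) : ℝ) : ℂ) *
        Complex.exp (((n - m : ℤ) : ℂ) * p.2 * Complex.I) := by
    rintro ⟨ρ, θ⟩ ⟨⟨hρ, -⟩, -⟩
    have hz : Complex.polarCoord.symm (ρ, θ) = ρ * Complex.exp (θ * Complex.I) := by
      simp [Complex.exp_mul_I, ← Complex.ofReal_cos, ← Complex.ofReal_sin]
    have hconj : (starRingEnd ℂ) (Complex.exp (θ * Complex.I)) =
        Complex.exp (-(θ * Complex.I)) := by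
      rw [← Complex.exp_conj]; simp
    have hexp : Complex.exp (m * -(θ * Complex.I)) * Complex.exp (n * (θ * Complex.I)) =
        Complex.exp (((n - m : ℤ) : ℂ) * θ * Complex.I) := by
      rw [← Complex.exp_add]; push_cast; ring_nf
    rw [hz, map_mul, Complex.conj_ofReal, hconj, norm_mul, Complex.norm_exp_ofReal_mul_I,
      Complex.norm_real, norm_of_nonneg hρ.le, mul_one, mul_pow, mul_pow,
      ← Complex.exp_nat_mul, ← Complex.exp_nat_mul, Complex.real_smul]
    push_cast [-Complex.ofReal_exp] at hexp ⊢
    linear_combination (ρ : ℂ) ^ (m + n + 1) * (rexp (-ρ ^ 2) : ℂ) * hexp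
  rw [Complex.setIntegral_closedBall_eq_polarCoord,
    setIntegral_congr_fun (measurableSet_Ioc.prod measurableSet_Ioo) hpolar,
    Measure.volume_eq_prod,
    setIntegral_prod_mul (fun ρ : ℝ => ((ρ ^ (m + n + 1) * rexp (-ρ ^ 2) : ℝ) : ℂ))
      (fun θ : ℝ => Complex.exp (((n - m : ℤ) : ℂ) * θ * Complex.I)),
    integral_exp_int_mul_I]
  by_cases h : m = n
  · subst h
    have hradial := integral_complex_ofReal (μ := volume.restrict (Ioc 0 r))
      (f := fun ρ : ℝ => ρ ^ (2 * m + 1) * rexp (-ρ ^ 2))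
    simp only [sub_self, if_true, radialMoment, ← two_mul m, hradial]
    ring
  · simp [h, sub_eq_zero, eq_comm]

noncomputable def truncatedResolution (coh : ℂ → ℓ²(ℕ, ℂ)) (r : ℝ) :
    ℓ²(ℕ, ℂ) →L[ℂ] ℓ²(ℕ, ℂ) :=
  (π : ℝ)⁻¹ • ∫ α in Metric.closedBall 0 r, InnerProductSpace.rankOne ℂ (coh α) (coh α)

section Coherent

variable {coh : ℂ → ℓ²(ℕ, ℂ)}
  (hcoh : ∀ (α : ℂ) (n : ℕ),
    coh α n = (Real.exp (-‖α‖ ^ 2 / 2) : ℂ) * α ^ n / (Real.sqrt n.factorial : ℂ))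
include hcoh

theorem inner_coh_coh (α β : ℂ) :
    ⟪coh α, coh β⟫_ℂ = Complex.exp (-(‖α‖ ^ 2 + ‖β‖ ^ 2) / 2 + (starRingEnd ℂ) α * β) := by
  have hterm (n : ℕ) : ⟪coh α n, coh β n⟫_ℂ =
      ((rexp (-‖α‖ ^ 2 / 2) * rexp (-‖β‖ ^ 2 / 2) : ℝ) : ℂ) *
        (((starRingEnd ℂ) α * β) ^ n / n.factorial) := by
    have hfac : (√(n.factorial : ℝ) : ℂ) * √(n.factorial : ℝ) = n.factorial := by
      rw [← Complex.ofReal_mul, Real.mul_self_sqrt (Nat.cast_nonneg _)]; norm_cast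
    rw [RCLike.inner_apply', hcoh, hcoh]
    simp only [map_div₀, map_mul, map_pow, Complex.conj_ofReal]
    rw [div_mul_div_comm, hfac, mul_pow]
    push_cast
    ring
  rw [lp.inner_eq_tsum, tsum_congr hterm, tsum_mul_left, ← congr_fun NormedSpace.exp_eq_tsum_div,
    ← Complex.exp_eq_exp_ℂ, Complex.exp_add]
  push_cast
  rw [← Complex.exp_add]
  ring_nf

theorem continuous_coh : Continuous coh :=
  continuous_of_continuous_inner (by simp_rw [inner_coh_coh hcoh]; fun_prop)

theorem continuous_rankOne_coh :
    Continuous fun α => InnerProductSpace.rankOne ℂ (coh α) (coh α) := by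
  simp_rw [InnerProductSpace.rankOne_def]
  exact (ContinuousLinearMap.smulRightL ℂ _ _).continuous₂.comp
    (((innerSL ℂ).continuous.comp (continuous_coh hcoh)).prodMk (continuous_coh hcoh))

theorem truncatedResolution_apply (r : ℝ) (φ : ℓ²(ℕ, ℂ)) :
    truncatedResolution coh r φ =
      (π : ℝ)⁻¹ • ∫ α in Metric.closedBall 0 r, ⟪coh α, φ⟫_ℂ • coh α := by
  rw [truncatedResolution, smul_apply, ContinuousLinearMap.integral_apply
    ((continuous_rankOne_coh hcoh).continuousOn.integrableOn_compact (isCompact_closedBall _ _))]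
  rfl

theorem truncatedResolution_single (r : ℝ) (m : ℕ) :
    truncatedResolution coh r (lp.single 2 m 1) =
      ((2 * radialMoment m r / m.factorial : ℝ) : ℂ) • lp.single 2 m 1 := by
  have hint : Integrable (fun α => ⟪coh α, lp.single 2 m 1⟫_ℂ • coh α)
      (volume.restrict (Metric.closedBall 0 r)) :=
    ((continuous_rankOne_coh hcoh).clm_apply continuous_const).continuousOn.integrableOn_compact
      (isCompact_closedBall _ _)
  ext n
  have hintegrand (α : ℂ) : (⟪coh α, lp.single 2 m 1⟫_ℂ • coh α) n =
      ((√(m.factorial : ℝ) * √(n.factorial : ℝ))⁻¹ : ℂ) *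
        ((starRingEnd ℂ) α ^ m * α ^ n * (rexp (-‖α‖ ^ 2) : ℂ)) := by
    have hexp : (rexp (-‖α‖ ^ 2) : ℂ) = rexp (-‖α‖ ^ 2 / 2) * rexp (-‖α‖ ^ 2 / 2) := by
      rw [← Complex.ofReal_mul, ← Real.exp_add]; ring_nf
    rw [lp.coeFn_smul, Pi.smul_apply, smul_eq_mul, lp.inner_single_right, RCLike.inner_apply',
      mul_one, hcoh, hcoh, hexp]
    simp only [map_div₀, map_mul, map_pow, Complex.conj_ofReal]
    ring
  rw [truncatedResolution_apply hcoh, lp.coeFn_smul, Pi.smul_apply, lp.integral_apply hint]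
  simp_rw [hintegrand]
  rw [integral_const_mul, integral_closedBall_conj_pow_mul_pow_mul_exp, lp.coeFn_smul,
    Pi.smul_apply, lp.single_apply, Pi.single_apply]
  by_cases h : m = n
  · subst h
    have hfac : (√(m.factorial : ℝ) : ℂ) * √(m.factorial : ℝ) = m.factorial := by
      rw [← Complex.ofReal_mul, Real.mul_self_sqrt (Nat.cast_nonneg _)]; norm_cast
    rw [if_pos rfl, if_pos rfl, hfac, Complex.real_smul, smul_eq_mul, mul_one]
    push_cast
    field_simp
  · simp [h, Ne.symm h]

theorem truncatedResolution_apply_apply (r : ℝ) (φ : ℓ²(ℕ, ℂ)) (n : ℕ) :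
    truncatedResolution coh r φ n = (2 * radialMoment n r / n.factorial : ℝ) * φ n :=
  lp.apply_eq_mul_of_map_single ENNReal.ofNat_ne_top (truncatedResolution_single hcoh r) φ n

theorem tendsto_truncatedResolution (φ : ℓ²(ℕ, ℂ)) :
    Tendsto (fun r => truncatedResolution coh r φ) atTop (𝓝 φ) := by
  have hweight (n : ℕ) :
      Tendsto (fun r => 2 * radialMoment n r / n.factorial) atTop (𝓝 1) := by
    have h := ((tendsto_radialMoment n).const_mul 2).div_const (n.factorial : ℝ)
    rwa [mul_div_cancel₀ _ two_ne_zero, div_self (by positivity)] at h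
  have hweight_mem (n : ℕ) (r : ℝ) : 2 * radialMoment n r / n.factorial ∈ Icc (0 : ℝ) 1 := by
    have := radialMoment_le n r
    have := radialMoment_nonneg n r
    constructor
    · positivity
    · rw [div_le_one (by positivity)]; linarith
  have hsub (r : ℝ) (n : ℕ) : (truncatedResolution coh r φ - φ) n =
      ((2 * radialMoment n r / n.factorial : ℝ) - 1 : ℂ) * φ n := by
    rw [lp.coeFn_sub, Pi.sub_apply, truncatedResolution_apply_apply hcoh, sub_one_mul]
  rw [← tendsto_sub_nhds_zero_iff]
  refine lp.tendsto_zero_of_norm_apply_le ENNReal.ofNat_ne_top φ (fun r n => ?_) (fun n => ?_)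
  · obtain ⟨h0, h1⟩ := hweight_mem n r
    rw [hsub, norm_mul, ← Complex.ofReal_one, ← Complex.ofReal_sub, Complex.norm_real,
      norm_of_nonpos (by linarith)]
    exact mul_le_of_le_one_left (norm_nonneg _) (by linarith)
  · simp_rw [hsub]
    simpa using
      (((Complex.continuous_ofReal.tendsto 1).comp (hweight n)).sub_const 1).mul_const (φ n)

end Coherent

/-- Strong convergence of the coherent-state resolution of the identity:
for every `φ ∈ ℓ²` and `ε > 0` there exists `R > 0` such that for all `r ≥ R`,
`‖φ − (1/π) ∫_{|α|≤r} |α⟩⟨α|φ⟩ d²α‖ < ε`. -/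
theorem strong_resolution_of_identity (coh : ℂ → lp (fun _ : ℕ => ℂ) 2)
    (hcoh : ∀ (α : ℂ) (n : ℕ),
      coh α n = (Real.exp (-‖α‖ ^ 2 / 2) : ℂ) * α ^ n / (Real.sqrt n.factorial : ℂ))
    (φ : lp (fun _ : ℕ => ℂ) 2) (ε : ℝ) (hε : 0 < ε) :
    ∃ R : ℝ, 0 < R ∧ ∀ r : ℝ, R ≤ r →
      ‖φ - (π : ℝ)⁻¹ • ∫ α in Metric.closedBall (0:ℂ) r, ⟪coh α, φ⟫_ℂ • coh α‖ < ε := by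
  obtain ⟨R, hR⟩ := eventually_atTop.1
    ((tendsto_truncatedResolution hcoh φ).eventually (Metric.ball_mem_nhds φ hε))
  refine ⟨max R 1, by positivity, fun r hr => ?_⟩
  have hr := hR r (le_of_max_le_left hr)
  rwa [dist_comm, dist_eq_norm, truncatedResolution_apply hcoh] at hr
end
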